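/- Explicit eigenvalue in the constant-coefficients case. Let τ₀, β₀ > 0, μ₀ ∈ ℝ, V > 0, and suppose U is a decaying eigenfunction with eigenvalue Λ for the parameter V, with constant polymerization rate τ(x) ≡ τ₀, constant degradation rate μ(x) ≡ μ₀, and linear fragmentation rate β(x) = β₀·x. If ∫₀^∞ U(x)dx > 0, then the mean polymer size satisfies (∫₀^∞ x·U(x)dx)/(∫₀^∞ U(x)dx) = √(τ₀V/β₀), and the eigenvalue is Λ = μ₀ − √(τ₀·β₀·V). -/

import Mathlib

open MeasureTheory Set Filter Topology

/-! Multiply the eigenvalue equation by `1` and by `x` and integrate over `(0, ∞)`. The transport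
term contributes `0` and `-V ∫ τU` (fundamental theorem of calculus, using the boundary limits of
`τU` and `xτU`), and after swapping the order of integration the mass and mean of the kernel turn
the fragmentation gain into `2 ∫ βU` and `∫ xβU`. With `M₀ = ∫ U` and `M₁ = ∫ xU`, constant
coefficients then give `(μ₀ - Λ) M₀ = β₀ M₁` and `(μ₀ - Λ) M₁ = τ₀ V M₀`, so
`β₀ M₁² = τ₀ V M₀²`. -/

/-- A *decaying eigenfunction* `U` (with `U'` the pointwise derivative of `τ U`) with
eigenvalue `Λ` for the parameter `V` of the prion growth-fragmentation operator:
`U ≥ 0`, `τ U` is differentiable on `(0,∞)` with derivative `U'`, the eigenvalue equation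
`V (τU)'(x) + (μ(x)+β(x)) U(x) − 2 ∫ₓ^∞ β(y) κ(x,y) U(y) dy = Λ U(x)` holds for `x > 0`,
the functions `U, xU, τU, μU, xμU, βU, xβU, (τU)'` are integrable on `(0,∞)`,
`β(y)κ(x,y)U(y)` and `x β(y)κ(x,y)U(y)` are integrable on `{0 < x < y}`, and
`τU → 0` at `0⁺`, `τU → 0` and `x τU → 0` at `∞`. -/
structure DecayingEigenfunction (V Lam : ℝ) (tau mu beta : ℝ → ℝ)
    (kappa : ℝ → ℝ → ℝ) (U U' : ℝ → ℝ) : Prop where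
  nonneg : ∀ x > 0, 0 ≤ U x
  hasDeriv : ∀ x > 0, HasDerivAt (fun y => tau y * U y) (U' x) x
  eigen : ∀ x > 0,
    V * U' x + (mu x + beta x) * U x - 2 * ∫ y in Ioi x, beta y * kappa x y * U y
      = Lam * U x
  int_U : IntegrableOn U (Ioi 0)
  int_xU : IntegrableOn (fun x => x * U x) (Ioi 0)
  int_tauU : IntegrableOn (fun x => tau x * U x) (Ioi 0)
  int_muU : IntegrableOn (fun x => mu x * U x) (Ioi 0)
  int_xmuU : IntegrableOn (fun x => x * mu x * U x) (Ioi 0)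
  int_betaU : IntegrableOn (fun x => beta x * U x) (Ioi 0)
  int_xbetaU : IntegrableOn (fun x => x * beta x * U x) (Ioi 0)
  int_U' : IntegrableOn U' (Ioi 0)
  int_frag : IntegrableOn (fun p : ℝ × ℝ => beta p.2 * kappa p.1 p.2 * U p.2)
      {p : ℝ × ℝ | 0 < p.1 ∧ p.1 < p.2}
  int_xfrag : IntegrableOn (fun p : ℝ × ℝ => p.1 * (beta p.2 * kappa p.1 p.2 * U p.2))
      {p : ℝ × ℝ | 0 < p.1 ∧ p.1 < p.2}
  lim_zero : Tendsto (fun x => tau x * U x) (nhdsWithin 0 (Ioi 0)) (nhds 0)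
  lim_top : Tendsto (fun x => tau x * U x) atTop (nhds 0)
  lim_xtop : Tendsto (fun x => x * (tau x * U x)) atTop (nhds 0)

theorem integral_Ioi_of_hasDerivAt_of_tendsto_nhdsGT {f f' : ℝ → ℝ} {a l m : ℝ}
    (hderiv : ∀ x ∈ Ioi a, HasDerivAt f (f' x) x) (f'int : IntegrableOn f' (Ioi a))
    (ha : Tendsto f (𝓝[>] a) (𝓝 l)) (hf : Tendsto f atTop (𝓝 m)) :
    ∫ x in Ioi a, f' x = m - l := by
  have hcont : ContinuousWithinAt (Function.update f a l) (Ici a) a := by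
    rwa [continuousWithinAt_update_same, Ici_sdiff_left]
  have hderiv' : ∀ x ∈ Ioi a, HasDerivAt (Function.update f a l) (f' x) x := fun x hx =>
    (hderiv x hx).congr_of_eventuallyEq <|
      (eventually_ne_nhds (ne_of_gt hx)).mono fun y hy => Function.update_of_ne hy ..
  have hf' : Tendsto (Function.update f a l) atTop (𝓝 m) :=
    hf.congr' <| (eventually_ne_atTop a).mono fun y hy => (Function.update_of_ne hy ..).symm
  simpa using integral_Ioi_of_hasDerivAt_of_tendsto hcont hderiv' f'int hf'

section Triangle

variable {F : ℝ × ℝ → ℝ} {a : ℝ}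

theorem indicator_triangle_apply_left {x : ℝ} (hx : a < x) :
    (fun y => {p : ℝ × ℝ | a < p.1 ∧ p.1 < p.2}.indicator F (x, y))
      = (Ioi x).indicator fun y => F (x, y) := by
  ext y
  simp [indicator, hx]

theorem indicator_triangle_apply_right (y : ℝ) :
    (fun x => {p : ℝ × ℝ | a < p.1 ∧ p.1 < p.2}.indicator F (x, y))
      = (Ioo a y).indicator fun x => F (x, y) := by
  ext x
  simp [indicator]

theorem integrable_indicator_triangle (hF : IntegrableOn F {p : ℝ × ℝ | a < p.1 ∧ p.1 < p.2}) :
    Integrable ({p : ℝ × ℝ | a < p.1 ∧ p.1 < p.2}.indicator F) (volume.prod volume) := by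
  have hS : MeasurableSet {p : ℝ × ℝ | a < p.1 ∧ p.1 < p.2} :=
    (measurableSet_lt measurable_const measurable_fst).inter
      (measurableSet_lt measurable_fst measurable_snd)
  rw [← Measure.volume_eq_prod]
  exact (integrable_indicator_iff hS).2 hF

theorem integrableOn_integral_Ioi_of_integrableOn_triangle
    (hF : IntegrableOn F {p : ℝ × ℝ | a < p.1 ∧ p.1 < p.2}) :
    IntegrableOn (fun x => ∫ y in Ioi x, F (x, y)) (Ioi a) := by
  refine (integrable_indicator_triangle hF).integral_prod_left.integrableOn.congr_fun
    (fun x hx => ?_) measurableSet_Ioi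
  rw [← integral_indicator measurableSet_Ioi, ← indicator_triangle_apply_left hx]

theorem integral_Ioi_integral_Ioi_swap (hF : IntegrableOn F {p : ℝ × ℝ | a < p.1 ∧ p.1 < p.2}) :
    ∫ x in Ioi a, ∫ y in Ioi x, F (x, y) = ∫ y in Ioi a, ∫ x in Ioo a y, F (x, y) := by
  set G := {p : ℝ × ℝ | a < p.1 ∧ p.1 < p.2}.indicator F
  calc ∫ x in Ioi a, ∫ y in Ioi x, F (x, y) = ∫ x in Ioi a, ∫ y, G (x, y) :=
        setIntegral_congr_fun measurableSet_Ioi fun x hx => by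
          rw [← integral_indicator measurableSet_Ioi, ← indicator_triangle_apply_left hx]
    _ = ∫ x, ∫ y, G (x, y) :=
        setIntegral_eq_integral_of_forall_compl_eq_zero fun x hx => by
          simp_all [G]
    _ = ∫ y, ∫ x, G (x, y) := integral_integral_swap (integrable_indicator_triangle hF)
    _ = ∫ y, ∫ x in Ioo a y, F (x, y) := by
        simp_rw [G, indicator_triangle_apply_right, integral_indicator measurableSet_Ioo]
    _ = ∫ y in Ioi a, ∫ x in Ioo a y, F (x, y) :=
        (setIntegral_eq_integral_of_forall_compl_eq_zero fun y hy => by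
          rw [Ioo_eq_empty (by simpa using hy), Measure.restrict_empty, integral_zero_measure]).symm

end Triangle

section Fragmentation

variable {beta U : ℝ → ℝ} {kappa : ℝ → ℝ → ℝ}

theorem integral_fragmentation_gain (hmass : ∀ y > 0, ∫ x in (0:ℝ)..y, kappa x y = 1)
    (hint : IntegrableOn (fun p : ℝ × ℝ => beta p.2 * kappa p.1 p.2 * U p.2)
      {p : ℝ × ℝ | 0 < p.1 ∧ p.1 < p.2}) :
    ∫ x in Ioi 0, ∫ y in Ioi x, beta y * kappa x y * U y = ∫ y in Ioi 0, beta y * U y := by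
  rw [integral_Ioi_integral_Ioi_swap hint]
  refine setIntegral_congr_fun measurableSet_Ioi fun y hy => ?_
  dsimp only
  rw [← integral_Ioc_eq_integral_Ioo, ← intervalIntegral.integral_of_le (le_of_lt hy),
    intervalIntegral.integral_mul_const, intervalIntegral.integral_const_mul, hmass y hy, mul_one]

theorem integral_mul_fragmentation_gain (hmom : ∀ y > 0, ∫ x in (0:ℝ)..y, x * kappa x y = y / 2)
    (hint : IntegrableOn (fun p : ℝ × ℝ => p.1 * (beta p.2 * kappa p.1 p.2 * U p.2))
      {p : ℝ × ℝ | 0 < p.1 ∧ p.1 < p.2}) :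
    ∫ x in Ioi 0, x * ∫ y in Ioi x, beta y * kappa x y * U y
      = (∫ y in Ioi 0, y * beta y * U y) / 2 := by
  simp_rw [← integral_const_mul]
  rw [integral_Ioi_integral_Ioi_swap hint, ← integral_div]
  refine setIntegral_congr_fun measurableSet_Ioi fun y hy => ?_
  dsimp only
  have hmul : ∀ x, x * (beta y * kappa x y * U y) = beta y * U y * (x * kappa x y) :=
    fun x => by ring
  rw [← integral_Ioc_eq_integral_Ioo, ← intervalIntegral.integral_of_le (le_of_lt hy)]
  simp_rw [hmul, intervalIntegral.integral_const_mul, hmom y hy]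
  ring

end Fragmentation

namespace DecayingEigenfunction

variable {V Lam : ℝ} {tau mu beta : ℝ → ℝ} {kappa : ℝ → ℝ → ℝ} {U U' : ℝ → ℝ}
  (hU : DecayingEigenfunction V Lam tau mu beta kappa U U')
include hU

theorem integral_deriv_eq_zero : ∫ x in Ioi 0, U' x = 0 := by
  simpa using integral_Ioi_of_hasDerivAt_of_tendsto_nhdsGT (fun x hx => hU.hasDeriv x hx)
    hU.int_U' hU.lim_zero hU.lim_top

theorem integrableOn_fragmentation_gain :
    IntegrableOn (fun x => ∫ y in Ioi x, beta y * kappa x y * U y) (Ioi 0) :=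
  integrableOn_integral_Ioi_of_integrableOn_triangle hU.int_frag

theorem integrableOn_mul_fragmentation_gain :
    IntegrableOn (fun x => x * ∫ y in Ioi x, beta y * kappa x y * U y) (Ioi 0) :=
  (integrableOn_integral_Ioi_of_integrableOn_triangle hU.int_xfrag).congr_fun
    (fun x _ => integral_const_mul x _) measurableSet_Ioi

theorem integrableOn_mul_deriv (hV : V ≠ 0) : IntegrableOn (fun x => x * U' x) (Ioi 0) := by
  have h : IntegrableOn (fun x => (Lam * (x * U x) - x * mu x * U x - x * beta x * U x
      + 2 * (x * ∫ y in Ioi x, beta y * kappa x y * U y)) / V) (Ioi 0) :=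
    ((((hU.int_xU.const_mul Lam).sub hU.int_xmuU).sub hU.int_xbetaU).add
      (hU.integrableOn_mul_fragmentation_gain.const_mul 2)).div_const V
  refine h.congr_fun (fun x hx => ?_) measurableSet_Ioi
  rw [div_eq_iff hV]
  linear_combination (-x) * hU.eigen x hx

theorem integral_mul_deriv (hV : V ≠ 0) :
    ∫ x in Ioi 0, x * U' x = -∫ x in Ioi 0, tau x * U x := by
  have hderiv : ∀ x ∈ Ioi (0:ℝ),
      HasDerivAt (fun y => y * (tau y * U y)) (tau x * U x + x * U' x) x := fun x hx =>
    ((hasDerivAt_id' x).mul (hU.hasDeriv x hx)).congr_deriv (by rw [one_mul])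
  have hzero : Tendsto (fun x => x * (tau x * U x)) (𝓝[>] 0) (𝓝 0) := by
    simpa using (tendsto_id.mono_left nhdsWithin_le_nhds).mul hU.lim_zero
  have h := integral_Ioi_of_hasDerivAt_of_tendsto_nhdsGT hderiv
    (hU.int_tauU.add (hU.integrableOn_mul_deriv hV)) hzero hU.lim_xtop
  rw [integral_add hU.int_tauU (hU.integrableOn_mul_deriv hV)] at h
  linarith

theorem zeroth_moment (hmass : ∀ y > 0, ∫ x in (0:ℝ)..y, kappa x y = 1) :
    (∫ x in Ioi 0, mu x * U x) - ∫ x in Ioi 0, beta x * U x = Lam * ∫ x in Ioi 0, U x := by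
  calc (∫ x in Ioi 0, mu x * U x) - ∫ x in Ioi 0, beta x * U x
      = V * (∫ x in Ioi 0, U' x) + ((∫ x in Ioi 0, mu x * U x) + ∫ x in Ioi 0, beta x * U x)
          - 2 * ∫ x in Ioi 0, ∫ y in Ioi x, beta y * kappa x y * U y := by
        rw [hU.integral_deriv_eq_zero, integral_fragmentation_gain hmass hU.int_frag]
        ring
    _ = ∫ x in Ioi 0, (V * U' x + (mu x * U x + beta x * U x)
          - 2 * ∫ y in Ioi x, beta y * kappa x y * U y) := by
        have hloss : IntegrableOn (fun x => mu x * U x + beta x * U x) (Ioi 0) :=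
          hU.int_muU.add hU.int_betaU
        have hlin : IntegrableOn (fun x => V * U' x + (mu x * U x + beta x * U x)) (Ioi 0) :=
          (hU.int_U'.const_mul V).add hloss
        rw [integral_sub hlin (hU.integrableOn_fragmentation_gain.const_mul 2),
          integral_add (hU.int_U'.const_mul V) hloss,
          integral_add hU.int_muU hU.int_betaU, integral_const_mul, integral_const_mul]
    _ = ∫ x in Ioi 0, Lam * U x :=
        setIntegral_congr_fun measurableSet_Ioi fun x hx => by
          linear_combination hU.eigen x hx
    _ = Lam * ∫ x in Ioi 0, U x := integral_const_mul Lam U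

theorem first_moment (hV : V ≠ 0)
    (hmom : ∀ y > 0, ∫ x in (0:ℝ)..y, x * kappa x y = y / 2) :
    (∫ x in Ioi 0, x * mu x * U x) - V * ∫ x in Ioi 0, tau x * U x
      = Lam * ∫ x in Ioi 0, x * U x := by
  have hxU' := (hU.integrableOn_mul_deriv hV).const_mul V
  calc (∫ x in Ioi 0, x * mu x * U x) - V * ∫ x in Ioi 0, tau x * U x
      = V * (∫ x in Ioi 0, x * U' x)
          + ((∫ x in Ioi 0, x * mu x * U x) + ∫ x in Ioi 0, x * beta x * U x)
          - 2 * ∫ x in Ioi 0, x * ∫ y in Ioi x, beta y * kappa x y * U y := by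
        rw [hU.integral_mul_deriv hV, integral_mul_fragmentation_gain hmom hU.int_xfrag]
        ring
    _ = ∫ x in Ioi 0, (V * (x * U' x) + (x * mu x * U x + x * beta x * U x)
          - 2 * (x * ∫ y in Ioi x, beta y * kappa x y * U y)) := by
        have hloss : IntegrableOn (fun x => x * mu x * U x + x * beta x * U x) (Ioi 0) :=
          hU.int_xmuU.add hU.int_xbetaU
        have hlin : IntegrableOn
            (fun x => V * (x * U' x) + (x * mu x * U x + x * beta x * U x)) (Ioi 0) :=
          hxU'.add hloss
        rw [integral_sub hlin (hU.integrableOn_mul_fragmentation_gain.const_mul 2),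
          integral_add hxU' hloss,
          integral_add hU.int_xmuU hU.int_xbetaU, integral_const_mul, integral_const_mul]
    _ = ∫ x in Ioi 0, Lam * (x * U x) :=
        setIntegral_congr_fun measurableSet_Ioi fun x hx => by
          linear_combination x * hU.eigen x hx
    _ = Lam * ∫ x in Ioi 0, x * U x := integral_const_mul Lam _

end DecayingEigenfunction

theorem div_eq_sqrt_and_eq_sub_sqrt_of_moments {m0 m1 lam mu b c : ℝ} (hm0 : 0 < m0)
    (hm1 : 0 ≤ m1) (hb : 0 < b) (h0 : mu * m0 - b * m1 = lam * m0)
    (h1 : mu * m1 - c * m0 = lam * m1) :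
    m1 / m0 = √(c / b) ∧ lam = mu - √(c * b) := by
  have hc : c = b * (m1 / m0) ^ 2 := by
    field_simp
    linear_combination m1 * h0 - m0 * h1
  have hr : 0 ≤ m1 / m0 := div_nonneg hm1 hm0.le
  constructor
  · rw [hc, mul_div_cancel_left₀ _ hb.ne', Real.sqrt_sq hr]
  · rw [hc, show b * (m1 / m0) ^ 2 * b = (b * (m1 / m0)) ^ 2 by ring,
      Real.sqrt_sq (mul_nonneg hb.le hr)]
    field_simp
    linear_combination -h0

theorem constant_coefficients_eigenvalue_general
    (V Lam tau0 beta0 mu0 : ℝ)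
    (hV : 0 < V) (hbeta0 : 0 < beta0)
    (kappa : ℝ → ℝ → ℝ) (U U' : ℝ → ℝ)
    (hkap_mass : ∀ y > 0, ∫ x in (0:ℝ)..y, kappa x y = 1)
    (hkap_mom : ∀ y > 0, ∫ x in (0:ℝ)..y, x * kappa x y = y / 2)
    (hU : DecayingEigenfunction V Lam (fun _ => tau0) (fun _ => mu0)
        (fun x => beta0 * x) kappa U U')
    (hpos : 0 < ∫ x in Ioi (0:ℝ), U x) :
    (∫ x in Ioi (0:ℝ), x * U x) / (∫ x in Ioi (0:ℝ), U x)
        = Real.sqrt (tau0 * V / beta0) ∧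
    Lam = mu0 - Real.sqrt (tau0 * beta0 * V) := by
  have h0 := hU.zeroth_moment hkap_mass
  have h1 := hU.first_moment hV.ne' hkap_mom
  simp only [mul_assoc, mul_left_comm _ mu0, integral_const_mul] at h0 h1
  have hm1 : 0 ≤ ∫ x in Ioi (0:ℝ), x * U x :=
    setIntegral_nonneg measurableSet_Ioi fun x hx => mul_nonneg (le_of_lt hx) (hU.nonneg x hx)
  rw [mul_right_comm tau0]
  exact div_eq_sqrt_and_eq_sub_sqrt_of_moments hpos hm1 hbeta0 h0 (by linear_combination h1)

/-- **Explicit eigenvalue in the constant-coefficients case**: with `τ ≡ τ₀`, `μ ≡ μ₀`,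
`β(x) = β₀ x` and `V > 0`, any decaying eigenfunction with positive mass has mean size
`(∫ x U)/(∫ U) = √(τ₀ V / β₀)` and eigenvalue `Λ = μ₀ − √(τ₀ β₀ V)`. -/
theorem constant_coefficients_eigenvalue
    (V Lam tau0 beta0 mu0 : ℝ)
    (hV : 0 < V) (htau0 : 0 < tau0) (hbeta0 : 0 < beta0)
    (kappa : ℝ → ℝ → ℝ) (U U' : ℝ → ℝ)
    (hkap_nn : ∀ x y : ℝ, 0 ≤ kappa x y)
    (hkap_supp : ∀ x y : ℝ, y ≤ x → kappa x y = 0)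
    (hkap_mass : ∀ y > 0, ∫ x in (0:ℝ)..y, kappa x y = 1)
    (hkap_mom : ∀ y > 0, ∫ x in (0:ℝ)..y, x * kappa x y = y / 2)
    (hU : DecayingEigenfunction V Lam (fun _ => tau0) (fun _ => mu0)
        (fun x => beta0 * x) kappa U U')
    (hpos : 0 < ∫ x in Ioi (0:ℝ), U x) :
    (∫ x in Ioi (0:ℝ), x * U x) / (∫ x in Ioi (0:ℝ), U x)
        = Real.sqrt (tau0 * V / beta0) ∧
    Lam = mu0 - Real.sqrt (tau0 * beta0 * V) :=
  constant_coefficients_eigenvalue_general V Lam tau0 beta0 mu0 hV hbeta0 kappa U U' hkap_mass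
    hkap_mom hU hpos
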